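/- In the reduced model where each open AD plant j connects only to its cheapest injection point ℓ(j), the optimal objective value coincides with that of the original model with two-index variables t_{jℓ}, x^I_{jℓ}: every feasible solution of the reduced model induces a feasible solution of the original model of equal transportation cost and equal or smaller set-up cost, and conversely every optimal solution of the original model can be transformed into a feasible solution of the reduced model of equal cost. -/
import Mathlib


open Finset

/-- The reduced model (each open AD plant connects only to its
cheapest injection point) and the original two-index model are equivalent: every
feasible solution of the reduced model induces a feasible solution of the
original model with the same remaining decisions (hence equal transportation
cost) and equal-or-smaller pipeline set-up cost; every feasible (in particular
every optimal) solution of the original model can be transformed into a feasible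
solution of the reduced model with the same remaining decisions; consequently the
optimal objective values of the two models coincide. -/
theorem stmt7 {P1 P2 P3 I : Type*}
    [Fintype P1] [Fintype P2] [Fintype P3] [Fintype I] [Nonempty I]
    (g : P2 → I → ℝ) (hg : ∀ j l, 0 ≤ g j l)
    (gmin : P2 → ℝ)
    (hgmin : ∀ j, (∃ l, gmin j = g j l) ∧ ∀ l, gmin j ≤ g j l)
    (B p δ γ₁ q W : ℝ)
    (hp : 0 < p ∧ p ≤ 1) (hδ : 0 < δ ∧ δ < 1) (hγ : 0 < γ₁ ∧ γ₁ < 1)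
    (hq : 0 < q ∧ q ≤ 1) (hW : 0 < W)
    (Other : Type*)
    (x2 : Other → P1 → P2 → ℝ) (x3 : Other → P2 → P3 → ℝ)
    (y2 : Other → P2 → ℝ) (Sc : Other → ℝ)
    (OFeas : Other → Prop)
    (hOFeas : ∀ o, OFeas o ↔
      ((∀ j, y2 o j = 0 ∨ y2 o j = 1) ∧ (∀ k j, 0 ≤ x2 o k j) ∧
       (∀ j k, 0 ≤ x3 o j k) ∧ (∀ j, ∑ k, x2 o k j ≤ p * δ * W * y2 o j)))
    (FeasOrig : Other → (P2 → I → ℝ) → (P2 → I → ℝ) → Prop)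
    (hFO : ∀ o t xI, FeasOrig o t xI ↔
      (OFeas o ∧ (∀ j l, t j l = 0 ∨ t j l = 1) ∧ (∀ j l, 0 ≤ xI j l) ∧
       (∑ j, ∑ l, g j l * t j l + Sc o ≤ B) ∧
       (∀ j, ∑ k, x3 o j k + ∑ l, xI j l = γ₁ * ∑ k, x2 o k j) ∧
       (∑ j, ∑ l, xI j l ≥ p * q * δ * γ₁ * W) ∧
       (∀ j l, xI j l ≤ p * δ * γ₁ * W * t j l) ∧
       (∀ j l, t j l ≤ y2 o j)))
    (FeasRed : Other → (P2 → ℝ) → (P2 → ℝ) → Prop)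
    (hFR : ∀ o t xI, FeasRed o t xI ↔
      (OFeas o ∧ (∀ j, t j = 0 ∨ t j = 1) ∧ (∀ j, 0 ≤ xI j) ∧
       (∑ j, gmin j * t j + Sc o ≤ B) ∧
       (∀ j, ∑ k, x3 o j k + xI j = γ₁ * ∑ k, x2 o k j) ∧
       (∑ j, xI j ≥ p * q * δ * γ₁ * W) ∧
       (∀ j, xI j ≤ p * δ * γ₁ * W * t j) ∧
       (∀ j, t j ≤ y2 o j))) :
    (∀ o t' xI', FeasRed o t' xI' →
      ∃ t xI, FeasOrig o t xI ∧
        ∑ j, ∑ l, g j l * t j l ≤ ∑ j, gmin j * t' j) ∧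
    (∀ o t xI, FeasOrig o t xI → ∃ t' xI', FeasRed o t' xI') ∧
    ({o | ∃ t xI, FeasOrig o t xI} = {o | ∃ t' xI', FeasRed o t' xI'}) ∧
    (∀ obj : Other → ℝ,
      sInf (obj '' {o | ∃ t xI, FeasOrig o t xI}) =
      sInf (obj '' {o | ∃ t' xI', FeasRed o t' xI'})) := by

  classical
  choose l0 hl0 using fun j => (hgmin j).1
  -- Direction 1: reduced → original
  have dir1 : ∀ o t' xI', FeasRed o t' xI' →
      ∃ t xI, FeasOrig o t xI ∧
        ∑ j, ∑ l, g j l * t j l ≤ ∑ j, gmin j * t' j := by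
    intro o t' xI' hfr
    rw [hFR] at hfr
    obtain ⟨hO, ht01, hxI0, hbud, hflow, hinj, hcap, hty⟩ := hfr
    refine ⟨fun j l => if l = l0 j then t' j else 0,
            fun j l => if l = l0 j then xI' j else 0, ?_, ?_⟩
    · rw [hFO]
      have hsumg : ∀ j, (∑ l, g j l * (if l = l0 j then t' j else 0))
          = gmin j * t' j := by
        intro j
        rw [hl0 j]
        simp [mul_ite, Finset.sum_ite_eq']
      have hsumx : ∀ j, (∑ l, (if l = l0 j then xI' j else 0)) = xI' j := by
        intro j; simp [Finset.sum_ite_eq']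
      have hy0 : ∀ j, 0 ≤ y2 o j := by
        intro j
        rcases ((hOFeas o).mp hO).1 j with h | h <;> simp [h]
      refine ⟨hO, ?_, ?_, ?_, ?_, ?_, ?_, ?_⟩
      · intro j l
        by_cases h : l = l0 j <;> simp [h, ht01 j]
      · intro j l
        by_cases h : l = l0 j <;> simp [h, hxI0 j]
      · calc ∑ j, ∑ l, g j l * (if l = l0 j then t' j else 0) + Sc o
            = ∑ j, gmin j * t' j + Sc o := by
              rw [Finset.sum_congr rfl fun j _ => hsumg j]
          _ ≤ B := hbud
      · intro j
        rw [hsumx j]; exact hflow j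
      · calc ∑ j, ∑ l, (if l = l0 j then xI' j else 0)
            = ∑ j, xI' j := Finset.sum_congr rfl fun j _ => hsumx j
          _ ≥ _ := hinj
      · intro j l
        by_cases h : l = l0 j <;> simp [h, hcap j]
      · intro j l
        by_cases h : l = l0 j <;> simp [h, hty j, hy0 j]
    · apply le_of_eq
      refine Finset.sum_congr rfl fun j _ => ?_
      rw [hl0 j]
      simp [mul_ite, Finset.sum_ite_eq']
  -- Direction 2: original → reduced
  have dir2 : ∀ o t xI, FeasOrig o t xI → ∃ t' xI', FeasRed o t' xI' := by
    intro o t xI hfo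
    rw [hFO] at hfo
    obtain ⟨hO, ht01, hxI0, hbud, hflow, hinj, hcap, hty⟩ := hfo
    obtain ⟨hy01, hx2, hx3, hx2cap⟩ := (hOFeas o).mp hO
    refine ⟨fun j => if 0 < ∑ l, xI j l then 1 else 0,
            fun j => ∑ l, xI j l, ?_⟩
    rw [hFR]
    have hsum0 : ∀ j, 0 ≤ ∑ l, xI j l :=
      fun j => Finset.sum_nonneg fun l _ => hxI0 j l
    -- if sum positive, some pipeline open and y2 = 1
    have hpos : ∀ j, 0 < ∑ l, xI j l → (∃ l, t j l = 1) ∧ y2 o j = 1 := by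
      intro j hj
      obtain ⟨l, -, hl⟩ : ∃ l ∈ (Finset.univ : Finset I), 0 < xI j l := by
        by_contra h
        push_neg at h
        have : ∑ l, xI j l ≤ 0 := Finset.sum_nonpos fun l hl' =>
          le_of_not_gt fun hc => absurd hc (by simpa using h l)
        linarith
      have htl : t j l = 1 := by
        rcases ht01 j l with h | h
        · exfalso
          have := hcap j l
          rw [h, mul_zero] at this
          linarith
        · exact h
      have hy : y2 o j = 1 := by
        have h1 : (1:ℝ) ≤ y2 o j := htl ▸ hty j l
        rcases hy01 j with h | h
        · linarith
        · exact h
      exact ⟨⟨l, htl⟩, hy⟩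
    refine ⟨hO, ?_, hsum0, ?_, fun j => hflow j, hinj, ?_, ?_⟩
    · intro j; by_cases h : 0 < ∑ l, xI j l <;> simp [h]
    · -- budget
      have key : ∀ j ∈ (Finset.univ : Finset P2),
          gmin j * (if 0 < ∑ l, xI j l then 1 else 0) ≤ ∑ l, g j l * t j l := by
        intro j _
        by_cases h : 0 < ∑ l, xI j l
        · obtain ⟨⟨l, htl⟩, -⟩ := hpos j h
          simp only [h, if_true, mul_one]
          calc gmin j ≤ g j l := (hgmin j).2 l
            _ = g j l * t j l := by rw [htl, mul_one]
            _ ≤ ∑ l, g j l * t j l := Finset.single_le_sum (f := fun l' => g j l' * t j l')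
                (fun l' _ => by
                  rcases ht01 j l' with h' | h' <;>
                    simp [h', hg j l']) (Finset.mem_univ l)
        · simp only [h, if_false, mul_zero]
          exact Finset.sum_nonneg fun l' _ => by
            rcases ht01 j l' with h' | h' <;> simp [h', hg j l']
      calc ∑ j, gmin j * (if 0 < ∑ l, xI j l then 1 else 0) + Sc o
          ≤ ∑ j, ∑ l, g j l * t j l + Sc o := by
            have := Finset.sum_le_sum key
            linarith
        _ ≤ B := hbud
    · -- capacity
      intro j
      by_cases h : 0 < ∑ l, xI j l
      · obtain ⟨-, hy⟩ := hpos j h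
        simp only [h, if_true, mul_one]
        have h1 : ∑ l, xI j l ≤ γ₁ * ∑ k, x2 o k j := by
          have hx3s : 0 ≤ ∑ k, x3 o j k := Finset.sum_nonneg fun k _ => hx3 j k
          have := hflow j
          linarith
        have h2 : ∑ k, x2 o k j ≤ p * δ * W := by
          have := hx2cap j
          rw [hy, mul_one] at this
          exact this
        nlinarith [hγ.1]
      · simp only [h, if_false, mul_zero]
        have := hsum0 j
        have h' : ∑ l, xI j l ≤ 0 := le_of_not_gt h
        linarith
    · intro j
      by_cases h : 0 < ∑ l, xI j l
      · obtain ⟨-, hy⟩ := hpos j h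
        simp [h, hy]
      · rcases hy01 j with h' | h' <;> simp [h, h']
  -- assemble
  have hsets : {o | ∃ t xI, FeasOrig o t xI} = {o | ∃ t' xI', FeasRed o t' xI'} := by
    ext o
    constructor
    · rintro ⟨t, xI, hf⟩
      exact dir2 o t xI hf
    · rintro ⟨t', xI', hf⟩
      obtain ⟨t, xI, hf', -⟩ := dir1 o t' xI' hf
      exact ⟨t, xI, hf'⟩
  exact ⟨dir1, dir2, hsets, fun obj => by rw [hsets]⟩
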